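/- arXiv:2309.02014 — 5 statements merged into one kernel-verified Lean document; each statement's English description precedes it below -/
import Mathlib

section
/- Let F : ℝ^p → ℝ be twice differentiable, L-smooth and μ-strongly convex on a closed convex set C with 0 < μ ≤ L. Then F is quadratically regular on C and its quadratic regularity constants satisfy μ/L ≤ γ_ℓ(C) ≤ γ_u(C) ≤ L/μ. -/
/-! Along the segment from `w₁` to `w₂`, `t ↦ F (w₁ + t (w₂ - w₁))` has second derivative
`‖w₂ - w₁‖²_{∇²F}`, which lies between `μ ‖w₂ - w₁‖²` and `L ‖w₂ - w₁‖²`; Taylor's theorem on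
`[0, 1]` then bounds `F w₂` above and below by the first-order model plus `L/2 ‖w₂ - w₁‖²` and
`μ/2 ‖w₂ - w₁‖²`. Since `μ ‖v‖² ≤ ‖v‖²_{∇²F(w₀)} ≤ L ‖v‖²`, replacing the Euclidean norm by the
`∇²F(w₀)`-norm costs the factors `1/μ` and `1/L`. -/

open Matrix

noncomputable section

/-- The `A`-weighted quadratic form `‖v‖_A² = vᵀ A v`. -/
def quadForm {p : ℕ} (A : Matrix (Fin p) (Fin p) ℝ) (v : Fin p → ℝ) : ℝ :=
  v ⬝ᵥ A.mulVec v

open Set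

theorem le_add_deriv_add_half_of_deriv2_le {φ φ' φ'' : ℝ → ℝ} {b : ℝ}
    (hφ : ∀ t ∈ Icc (0 : ℝ) 1, HasDerivAt φ (φ' t) t)
    (hφ' : ∀ t ∈ Icc (0 : ℝ) 1, HasDerivAt φ' (φ'' t) t)
    (hb : ∀ t ∈ Icc (0 : ℝ) 1, φ'' t ≤ b) :
    φ 1 ≤ φ 0 + φ' 0 + b / 2 := by
  have hderiv : ∀ t ∈ Icc (0 : ℝ) 1, HasDerivAt (fun s => b / 2 * s ^ 2 - φ s) (b * t - φ' t) t :=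
    fun t ht => (((hasDerivAt_pow 2 t).const_mul (b / 2)).fun_sub (hφ t ht)).congr_deriv
      (by push_cast; ring)
  have hderiv2 : ∀ t ∈ Icc (0 : ℝ) 1, HasDerivAt (fun s => b * s - φ' s) (b - φ'' t) t :=
    fun t ht => (((hasDerivAt_id' t).const_mul b).fun_sub (hφ' t ht)).congr_deriv (by ring)
  have hconv : ConvexOn ℝ (Icc 0 1) fun s => b / 2 * s ^ 2 - φ s := by
    refine convexOn_of_hasDerivWithinAt2_nonneg (convex_Icc 0 1)
      (fun t ht => (hderiv t ht).continuousAt.continuousWithinAt)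
      (fun t ht => (hderiv t (interior_subset ht)).hasDerivWithinAt)
      (fun t ht => (hderiv2 t (interior_subset ht)).hasDerivWithinAt)
      (fun t ht => sub_nonneg.2 (hb t (interior_subset ht)))
  have htangent := hconv.le_slope_of_hasDerivAt (left_mem_Icc.2 zero_le_one)
    (right_mem_Icc.2 zero_le_one) zero_lt_one (hderiv 0 (left_mem_Icc.2 zero_le_one))
  simp only [slope_def_field] at htangent
  linarith

theorem add_deriv_add_half_le_of_le_deriv2 {φ φ' φ'' : ℝ → ℝ} {b : ℝ}
    (hφ : ∀ t ∈ Icc (0 : ℝ) 1, HasDerivAt φ (φ' t) t)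
    (hφ' : ∀ t ∈ Icc (0 : ℝ) 1, HasDerivAt φ' (φ'' t) t)
    (hb : ∀ t ∈ Icc (0 : ℝ) 1, b ≤ φ'' t) :
    φ 0 + φ' 0 + b / 2 ≤ φ 1 := by
  have := le_add_deriv_add_half_of_deriv2_le (φ := -φ) (φ' := -φ') (φ'' := -φ'') (b := -b)
    (fun t ht => (hφ t ht).neg) (fun t ht => (hφ' t ht).neg) (fun t ht => neg_le_neg (hb t ht))
  simp only [Pi.neg_apply] at this
  linarith

theorem HasDerivAt.dotProduct_const {n : Type*} [Fintype n] {f : ℝ → n → ℝ} {f' : n → ℝ}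
    {t : ℝ} (hf : HasDerivAt f f' t) (v : n → ℝ) :
    HasDerivAt (fun s => f s ⬝ᵥ v) (f' ⬝ᵥ v) t :=
  HasDerivAt.fun_sum fun i _ => (hasDerivAt_pi.1 hf i).mul_const (v i)

theorem HasFDerivAt.hasDerivAt_add_smul {E G : Type*} [NormedAddCommGroup E] [NormedSpace ℝ E]
    [NormedAddCommGroup G] [NormedSpace ℝ G] {f : E → G} {f' : E →L[ℝ] G} {x v : E} {t : ℝ}
    (hf : HasFDerivAt f f' (x + t • v)) :
    HasDerivAt (fun s : ℝ => f (x + s • v)) (f' v) t := by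
  have hline : HasDerivAt (fun s : ℝ => x + s • v) v t := by
    simpa using ((hasDerivAt_id t).smul_const v).const_add x
  exact hf.comp_hasDerivAt t hline

section Taylor

variable {p : ℕ} {F : (Fin p → ℝ) → ℝ} {g : (Fin p → ℝ) → Fin p → ℝ}
  {H : (Fin p → ℝ) → Matrix (Fin p) (Fin p) ℝ}

theorem hasDerivAt_add_smul_of_gradient
    (hgrad : ∀ x, ∃ f' : (Fin p → ℝ) →L[ℝ] ℝ, HasFDerivAt F f' x ∧ ∀ v, f' v = g x ⬝ᵥ v)
    (x v : Fin p → ℝ) (t : ℝ) :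
    HasDerivAt (fun s => F (x + s • v)) (g (x + t • v) ⬝ᵥ v) t := by
  obtain ⟨f', hf', hf'v⟩ := hgrad (x + t • v)
  simpa only [hf'v] using hf'.hasDerivAt_add_smul

theorem hasDerivAt_add_smul_of_hessian
    (hhess : ∀ x, ∃ g' : (Fin p → ℝ) →L[ℝ] (Fin p → ℝ),
      HasFDerivAt g g' x ∧ ∀ v, g' v = (H x).mulVec v)
    (x v : Fin p → ℝ) (t : ℝ) :
    HasDerivAt (fun s => g (x + s • v) ⬝ᵥ v) (quadForm (H (x + t • v)) v) t := by
  obtain ⟨g', hg', hg'v⟩ := hhess (x + t • v)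
  have := hg'.hasDerivAt_add_smul.dotProduct_const v
  rwa [hg'v, dotProduct_comm] at this

variable
    (hgrad : ∀ x, ∃ f' : (Fin p → ℝ) →L[ℝ] ℝ, HasFDerivAt F f' x ∧ ∀ v, f' v = g x ⬝ᵥ v)
    (hhess : ∀ x, ∃ g' : (Fin p → ℝ) →L[ℝ] (Fin p → ℝ),
      HasFDerivAt g g' x ∧ ∀ v, g' v = (H x).mulVec v)
include hgrad hhess

theorem le_add_dotProduct_add_of_quadForm_le {w₁ w₂ : Fin p → ℝ} {b : ℝ}
    (hb : ∀ w ∈ segment ℝ w₁ w₂, quadForm (H w) (w₂ - w₁) ≤ b) :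
    F w₂ ≤ F w₁ + g w₁ ⬝ᵥ (w₂ - w₁) + b / 2 := by
  simpa using le_add_deriv_add_half_of_deriv2_le
    (fun t _ => hasDerivAt_add_smul_of_gradient hgrad w₁ (w₂ - w₁) t)
    (fun t _ => hasDerivAt_add_smul_of_hessian hhess w₁ (w₂ - w₁) t)
    (fun t ht => hb _ ((convex_segment w₁ w₂).add_smul_sub_mem (left_mem_segment ℝ w₁ w₂)
      (right_mem_segment ℝ w₁ w₂) ht))

theorem add_dotProduct_add_le_of_le_quadForm {w₁ w₂ : Fin p → ℝ} {b : ℝ}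
    (hb : ∀ w ∈ segment ℝ w₁ w₂, b ≤ quadForm (H w) (w₂ - w₁)) :
    F w₁ + g w₁ ⬝ᵥ (w₂ - w₁) + b / 2 ≤ F w₂ := by
  simpa using add_deriv_add_half_le_of_le_deriv2
    (fun t _ => hasDerivAt_add_smul_of_gradient hgrad w₁ (w₂ - w₁) t)
    (fun t _ => hasDerivAt_add_smul_of_hessian hhess w₁ (w₂ - w₁) t)
    (fun t ht => hb _ ((convex_segment w₁ w₂).add_smul_sub_mem (left_mem_segment ℝ w₁ w₂)
      (right_mem_segment ℝ w₁ w₂) ht))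

end Taylor

namespace Matrix.PosSemidef

variable {p : ℕ} {A : Matrix (Fin p) (Fin p) ℝ} {c : ℝ}

theorem mul_dotProduct_self_le_quadForm (h : (A - c • 1).PosSemidef) (v : Fin p → ℝ) :
    c * (v ⬝ᵥ v) ≤ quadForm A v := by
  simpa only [quadForm, star_trivial, sub_mulVec, smul_mulVec, one_mulVec, dotProduct_sub,
    dotProduct_smul, smul_eq_mul, sub_nonneg] using h.dotProduct_mulVec_nonneg v

theorem quadForm_le_mul_dotProduct_self (h : (c • 1 - A).PosSemidef) (v : Fin p → ℝ) :
    quadForm A v ≤ c * (v ⬝ᵥ v) := by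
  simpa only [quadForm, star_trivial, sub_mulVec, smul_mulVec, one_mulVec, dotProduct_sub,
    dotProduct_smul, smul_eq_mul, sub_nonneg] using h.dotProduct_mulVec_nonneg v

end Matrix.PosSemidef

theorem quadratic_regularity_of_smooth_strongly_convex_general {p : ℕ}
    (C : Set (Fin p → ℝ)) (hCconv : Convex ℝ C)
    (F : (Fin p → ℝ) → ℝ) (g : (Fin p → ℝ) → Fin p → ℝ)
    (H : (Fin p → ℝ) → Matrix (Fin p) (Fin p) ℝ)
    (hgrad : ∀ x, ∃ f' : (Fin p → ℝ) →L[ℝ] ℝ, HasFDerivAt F f' x ∧ ∀ v, f' v = g x ⬝ᵥ v)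
    (hhess : ∀ x, ∃ g' : (Fin p → ℝ) →L[ℝ] (Fin p → ℝ),
      HasFDerivAt g g' x ∧ ∀ v, g' v = (H x).mulVec v)
    (L μ : ℝ) (hμ : 0 < μ) (hμL : μ ≤ L)
    (hsc : ∀ w ∈ C, (H w - μ • (1 : Matrix (Fin p) (Fin p) ℝ)).PosSemidef)
    (hsm : ∀ w ∈ C, (L • (1 : Matrix (Fin p) (Fin p) ℝ) - H w).PosSemidef) :
    ∀ w₀ ∈ C, ∀ w₁ ∈ C, ∀ w₂ ∈ C,
      F w₂ ≤ F w₁ + g w₁ ⬝ᵥ (w₂ - w₁) + (L / μ) / 2 * quadForm (H w₀) (w₂ - w₁) ∧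
      F w₂ ≥ F w₁ + g w₁ ⬝ᵥ (w₂ - w₁) + (μ / L) / 2 * quadForm (H w₀) (w₂ - w₁) := by
  intro w₀ hw₀ w₁ hw₁ w₂ hw₂
  set d := w₂ - w₁
  have hseg := hCconv.segment_subset hw₁ hw₂
  have hL : 0 < L := hμ.trans_le hμL
  constructor
  · calc F w₂ ≤ F w₁ + g w₁ ⬝ᵥ d + L * (d ⬝ᵥ d) / 2 :=
          le_add_dotProduct_add_of_quadForm_le hgrad hhess fun w hw =>
            (hsm w (hseg hw)).quadForm_le_mul_dotProduct_self d
      _ = F w₁ + g w₁ ⬝ᵥ d + (L / μ) / 2 * (μ * (d ⬝ᵥ d)) := by field_simp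
      _ ≤ F w₁ + g w₁ ⬝ᵥ d + (L / μ) / 2 * quadForm (H w₀) d := by
          gcongr
          exact (hsc w₀ hw₀).mul_dotProduct_self_le_quadForm d
  · calc F w₁ + g w₁ ⬝ᵥ d + (μ / L) / 2 * quadForm (H w₀) d
          ≤ F w₁ + g w₁ ⬝ᵥ d + (μ / L) / 2 * (L * (d ⬝ᵥ d)) := by
          gcongr
          exact (hsm w₀ hw₀).quadForm_le_mul_dotProduct_self d
      _ = F w₁ + g w₁ ⬝ᵥ d + μ * (d ⬝ᵥ d) / 2 := by field_simp
      _ ≤ F w₂ :=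
          add_dotProduct_add_le_of_le_quadForm hgrad hhess fun w hw =>
            (hsc w (hseg hw)).mul_dotProduct_self_le_quadForm d

/-- If `F` is `L`-smooth and `μ`-strongly convex on a closed convex set `C`
(`μI ⪯ ∇²F(w) ⪯ LI` on `C`), then `F` is quadratically regular on `C` with quadratic
regularity constants satisfying `μ/L ≤ γℓ(C) ≤ γu(C) ≤ L/μ`: the upper quadratic
regularity bound holds with constant `L/μ` and the lower bound with constant `μ/L`. -/
theorem quadratic_regularity_of_smooth_strongly_convex {p : ℕ}
    (C : Set (Fin p → ℝ)) (hCconv : Convex ℝ C) (hCclosed : IsClosed C)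
    (F : (Fin p → ℝ) → ℝ) (g : (Fin p → ℝ) → Fin p → ℝ)
    (H : (Fin p → ℝ) → Matrix (Fin p) (Fin p) ℝ)
    (hgrad : ∀ x, ∃ f' : (Fin p → ℝ) →L[ℝ] ℝ, HasFDerivAt F f' x ∧ ∀ v, f' v = g x ⬝ᵥ v)
    (hhess : ∀ x, ∃ g' : (Fin p → ℝ) →L[ℝ] (Fin p → ℝ),
      HasFDerivAt g g' x ∧ ∀ v, g' v = (H x).mulVec v)
    (L μ : ℝ) (hμ : 0 < μ) (hμL : μ ≤ L)
    (hsc : ∀ w ∈ C, (H w - μ • (1 : Matrix (Fin p) (Fin p) ℝ)).PosSemidef)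
    (hsm : ∀ w ∈ C, (L • (1 : Matrix (Fin p) (Fin p) ℝ) - H w).PosSemidef) :
    ∀ w₀ ∈ C, ∀ w₁ ∈ C, ∀ w₂ ∈ C,
      F w₂ ≤ F w₁ + g w₁ ⬝ᵥ (w₂ - w₁) + (L / μ) / 2 * quadForm (H w₀) (w₂ - w₁) ∧
      F w₂ ≥ F w₁ + g w₁ ⬝ᵥ (w₂ - w₁) + (μ / L) / 2 * quadForm (H w₀) (w₂ - w₁) :=
  quadratic_regularity_of_smooth_strongly_convex_general C hCconv F g H hgrad hhess L μ hμ hμL hsc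
    hsm
end
end

section
/- Let F(w) = (1/n)∑ᵢ φᵢ(aᵢᵀw) + (ν/2)‖w‖², where each φᵢ is twice differentiable convex, and let 𝒞 ⊆ ℝ^p be convex. Let Σ̂ = (1/n)AᵀA where A has rows aᵢᵀ, u = supᵢ sup_{w∈𝒞} φᵢ''(aᵢᵀw) and ℓ = infᵢ inf_{w∈𝒞} φᵢ''(aᵢᵀw), with 0 ≤ ℓ ≤ u < ∞ and ν > 0. Then F is quadratically regular on 𝒞 with (ℓλ₁(Σ̂)+ν)/(uλ₁(Σ̂)+ν) ≤ γ_ℓ(𝒞) ≤ γ_u(𝒞) ≤ (uλ₁(Σ̂)+ν)/(ℓλ₁(Σ̂)+ν). -/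
/-!
Restricted to the segment `t ↦ w₁ + t d`, `d = w₂ - w₁`, which stays in `C`, the objective is a
scalar function with second derivative `‖d‖²_{H(w₁ + t d)}`, so second-order Taylor bounds reduce
the claim to comparing `‖d‖²_{H(w)}` for two points `w ∈ C`. Each such value lies between
`ℓ q + ν s` and `u q + ν s`, where `s = ‖d‖²` and `q = dᵀ Σ̂ d ≤ λ₁(Σ̂) s`, and the ratio of these
two bounds only grows with `q / s`, so it is at most `(u λ₁ + ν) / (ℓ λ₁ + ν)`.
-/

open Matrix

noncomputable section

open Set

theorem monotoneOn_Icc_of_hasDerivAt_nonneg {f f' : ℝ → ℝ} {a b : ℝ}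
    (hf : ∀ t, HasDerivAt f (f' t) t) (hf' : ∀ t ∈ Ioo a b, 0 ≤ f' t) :
    MonotoneOn f (Icc a b) :=
  monotoneOn_of_hasDerivWithinAt_nonneg (convex_Icc a b)
    (fun t _ => (hf t).continuousAt.continuousWithinAt) (fun t _ => (hf t).hasDerivWithinAt)
    (by simpa only [interior_Icc] using hf')

theorem le_add_deriv_add_half_of_deriv2_le_s8 {f f' f'' : ℝ → ℝ} {M : ℝ}
    (hf : ∀ t, HasDerivAt f (f' t) t) (hf' : ∀ t, HasDerivAt f' (f'' t) t)
    (hM : ∀ t ∈ Icc (0 : ℝ) 1, f'' t ≤ M) :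
    f 1 ≤ f 0 + f' 0 + M / 2 := by
  have hslope : ∀ t ∈ Icc (0 : ℝ) 1, f' t ≤ f' 0 + M * t := by
    have hmono : MonotoneOn (fun t => f' 0 + M * t - f' t) (Icc 0 1) := by
      refine monotoneOn_Icc_of_hasDerivAt_nonneg (f' := fun t => M - f'' t) (fun t => ?_)
        fun t ht => sub_nonneg.2 (hM t (Ioo_subset_Icc_self ht))
      simpa using (((hasDerivAt_id t).const_mul M).const_add (f' 0)).fun_sub (hf' t)
    intro t ht
    simpa using hmono (left_mem_Icc.2 zero_le_one) ht ht.1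
  have hmono : MonotoneOn (fun t => f 0 + f' 0 * t + M / 2 * t ^ 2 - f t) (Icc 0 1) := by
    refine monotoneOn_Icc_of_hasDerivAt_nonneg (f' := fun t => f' 0 + M * t - f' t)
      (fun t => ?_) fun t ht => sub_nonneg.2 (hslope t (Ioo_subset_Icc_self ht))
    exact ((((hasDerivAt_id t).const_mul (f' 0)).const_add (f 0)).fun_add
      ((hasDerivAt_pow 2 t).const_mul (M / 2))).fun_sub (hf t) |>.congr_deriv (by
        simp only [Nat.cast_ofNat, Nat.add_one_sub_one, pow_one]; ring)
  simpa using hmono (left_mem_Icc.2 zero_le_one) (right_mem_Icc.2 zero_le_one) zero_le_one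

theorem add_deriv_add_half_le_of_le_deriv2_s8 {f f' f'' : ℝ → ℝ} {m : ℝ}
    (hf : ∀ t, HasDerivAt f (f' t) t) (hf' : ∀ t, HasDerivAt f' (f'' t) t)
    (hm : ∀ t ∈ Icc (0 : ℝ) 1, m ≤ f'' t) :
    f 0 + f' 0 + m / 2 ≤ f 1 := by
  have := le_add_deriv_add_half_of_deriv2_le_s8 (fun t => (hf t).fun_neg)
    (fun t => (hf' t).fun_neg) (M := -m) fun t ht => neg_le_neg (hm t ht)
  linarith

section QuadForm

variable {p : ℕ}

theorem quadForm_add (A B : Matrix (Fin p) (Fin p) ℝ) (v : Fin p → ℝ) :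
    quadForm (A + B) v = quadForm A v + quadForm B v := by
  simp only [quadForm, add_mulVec, dotProduct_add]

theorem quadForm_sub (A B : Matrix (Fin p) (Fin p) ℝ) (v : Fin p → ℝ) :
    quadForm (A - B) v = quadForm A v - quadForm B v := by
  simp only [quadForm, sub_mulVec, dotProduct_sub]

theorem quadForm_smul (c : ℝ) (A : Matrix (Fin p) (Fin p) ℝ) (v : Fin p → ℝ) :
    quadForm (c • A) v = c * quadForm A v := by
  simp only [quadForm, smul_mulVec, dotProduct_smul, smul_eq_mul]

theorem quadForm_sum {ι : Type*} (s : Finset ι) (A : ι → Matrix (Fin p) (Fin p) ℝ)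
    (v : Fin p → ℝ) : quadForm (∑ i ∈ s, A i) v = ∑ i ∈ s, quadForm (A i) v := by
  simp only [quadForm, sum_mulVec, dotProduct_sum]

theorem quadForm_one (v : Fin p → ℝ) : quadForm 1 v = v ⬝ᵥ v := by
  simp only [quadForm, one_mulVec]

theorem quadForm_vecMulVec_self (b v : Fin p → ℝ) :
    quadForm (vecMulVec b b) v = (b ⬝ᵥ v) ^ 2 := by
  rw [quadForm, vecMulVec_mulVec, dotProduct_smul, op_smul_eq_mul, dotProduct_comm v b, sq]

theorem quadForm_le_of_posSemidef_sub {A B : Matrix (Fin p) (Fin p) ℝ} (h : (B - A).PosSemidef)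
    (v : Fin p → ℝ) : quadForm A v ≤ quadForm B v := by
  have := h.dotProduct_mulVec_nonneg v
  rw [star_trivial, ← quadForm, quadForm_sub] at this
  linarith

theorem nonneg_of_mulVec_eq_smul_of_quadForm_nonneg {A : Matrix (Fin p) (Fin p) ℝ}
    (hA : ∀ v, 0 ≤ quadForm A v) {v : Fin p → ℝ} (hv : v ≠ 0) {μ : ℝ}
    (hμ : A *ᵥ v = μ • v) : 0 ≤ μ := by
  have hvv : 0 < v ⬝ᵥ v := by simpa only [star_trivial] using dotProduct_star_self_pos_iff.2 hv
  have := hA v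
  rw [quadForm, hμ, dotProduct_smul, smul_eq_mul] at this
  exact nonneg_of_mul_nonneg_left this hvv

end QuadForm

theorem hasDerivAt_dotProduct_add_smul {p : ℕ} (b w d : Fin p → ℝ) (t : ℝ) :
    HasDerivAt (fun t : ℝ => b ⬝ᵥ (w + t • d)) (b ⬝ᵥ d) t := by
  simpa [dotProduct_add, dotProduct_smul] using
    ((hasDerivAt_id t).mul_const (b ⬝ᵥ d)).const_add (b ⬝ᵥ w)

theorem hasDerivAt_dotProduct_self_add_smul {p : ℕ} (w d : Fin p → ℝ) (t : ℝ) :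
    HasDerivAt (fun t : ℝ => (w + t • d) ⬝ᵥ (w + t • d)) (2 * ((w + t • d) ⬝ᵥ d)) t := by
  have hexpand : (fun t : ℝ => (w + t • d) ⬝ᵥ (w + t • d))
      = fun t => w ⬝ᵥ w + 2 * (w ⬝ᵥ d) * t + (d ⬝ᵥ d) * t ^ 2 := by
    ext t
    simp only [add_dotProduct, dotProduct_add, smul_dotProduct, dotProduct_smul, smul_eq_mul,
      dotProduct_comm d w]
    ring
  rw [hexpand]
  refine ((((hasDerivAt_id t).const_mul (2 * (w ⬝ᵥ d))).const_add (w ⬝ᵥ w)).fun_add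
    ((hasDerivAt_pow 2 t).const_mul (d ⬝ᵥ d))).congr_deriv ?_
  simp only [add_dotProduct, smul_dotProduct, smul_eq_mul]
  ring

theorem hasDerivAt_comp_dotProduct_add_smul {p : ℕ} {f f' : ℝ → ℝ}
    (hf : ∀ x, HasDerivAt f (f' x) x) (b w d : Fin p → ℝ) (t : ℝ) :
    HasDerivAt (fun t : ℝ => f (b ⬝ᵥ (w + t • d))) (f' (b ⬝ᵥ (w + t • d)) * (b ⬝ᵥ d)) t :=
  (hf _).comp t (hasDerivAt_dotProduct_add_smul b w d t)

section GLM

variable {n p : ℕ} (a : Fin n → Fin p → ℝ) (ν : ℝ)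

def glmObjective (φ : Fin n → ℝ → ℝ) (w : Fin p → ℝ) : ℝ :=
  (n : ℝ)⁻¹ * ∑ i, φ i (a i ⬝ᵥ w) + ν / 2 * (w ⬝ᵥ w)

def glmGradient (φ' : Fin n → ℝ → ℝ) (w : Fin p → ℝ) : Fin p → ℝ :=
  (n : ℝ)⁻¹ • (∑ i, φ' i (a i ⬝ᵥ w) • a i) + ν • w

def glmHessian (φ'' : Fin n → ℝ → ℝ) (w : Fin p → ℝ) : Matrix (Fin p) (Fin p) ℝ :=
  (n : ℝ)⁻¹ • (∑ i, φ'' i (a i ⬝ᵥ w) • vecMulVec (a i) (a i)) + ν • 1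

def sampleCovariance : Matrix (Fin p) (Fin p) ℝ :=
  (n : ℝ)⁻¹ • ((Matrix.of a)ᵀ * Matrix.of a)

theorem glmGradient_dotProduct (φ' : Fin n → ℝ → ℝ) (w d : Fin p → ℝ) :
    glmGradient a ν φ' w ⬝ᵥ d
      = (n : ℝ)⁻¹ * ∑ i, φ' i (a i ⬝ᵥ w) * (a i ⬝ᵥ d) + ν * (w ⬝ᵥ d) := by
  simp only [glmGradient, add_dotProduct, smul_dotProduct, sum_dotProduct, smul_eq_mul]

theorem quadForm_glmHessian (φ'' : Fin n → ℝ → ℝ) (w d : Fin p → ℝ) :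
    quadForm (glmHessian a ν φ'' w) d
      = (n : ℝ)⁻¹ * ∑ i, φ'' i (a i ⬝ᵥ w) * (a i ⬝ᵥ d) ^ 2 + ν * (d ⬝ᵥ d) := by
  simp only [glmHessian, quadForm_add, quadForm_smul, quadForm_sum, quadForm_vecMulVec_self,
    quadForm_one]

theorem quadForm_sampleCovariance (d : Fin p → ℝ) :
    quadForm (sampleCovariance a) d = (n : ℝ)⁻¹ * ∑ i, (a i ⬝ᵥ d) ^ 2 := by
  rw [sampleCovariance, quadForm_smul, quadForm, ← mulVec_mulVec, dotProduct_mulVec,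
    vecMul_transpose]
  simp only [dotProduct, sq]
  rfl

theorem quadForm_sampleCovariance_nonneg (d : Fin p → ℝ) :
    0 ≤ quadForm (sampleCovariance a) d := by
  rw [quadForm_sampleCovariance]
  positivity

theorem quadForm_glmHessian_mem_Icc {φ'' : Fin n → ℝ → ℝ} {w : Fin p → ℝ} {ℓ u : ℝ}
    (h : ∀ i, φ'' i (a i ⬝ᵥ w) ∈ Icc ℓ u) (d : Fin p → ℝ) :
    quadForm (glmHessian a ν φ'' w) d ∈ Icc (ℓ * quadForm (sampleCovariance a) d + ν * (d ⬝ᵥ d))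
      (u * quadForm (sampleCovariance a) d + ν * (d ⬝ᵥ d)) := by
  rw [quadForm_glmHessian, quadForm_sampleCovariance, mul_left_comm ℓ, mul_left_comm u]
  simp only [Finset.mul_sum]
  exact ⟨by gcongr with i; exact (h i).1, by gcongr with i; exact (h i).2⟩

variable {a ν}

theorem hasDerivAt_glmObjective_add_smul {φ φ' : Fin n → ℝ → ℝ}
    (hφ : ∀ i x, HasDerivAt (φ i) (φ' i x) x) (w d : Fin p → ℝ) (t : ℝ) :
    HasDerivAt (fun t : ℝ => glmObjective a ν φ (w + t • d))
      (glmGradient a ν φ' (w + t • d) ⬝ᵥ d) t := by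
  rw [glmGradient_dotProduct]
  have hsum := HasDerivAt.fun_sum (u := Finset.univ) fun i _ =>
    hasDerivAt_comp_dotProduct_add_smul (hφ i) (a i) w d t
  refine ((hsum.const_mul _).fun_add
    ((hasDerivAt_dotProduct_self_add_smul w d t).const_mul (ν / 2))).congr_deriv ?_
  ring

theorem hasDerivAt_glmGradient_dotProduct_add_smul {φ' φ'' : Fin n → ℝ → ℝ}
    (hφ' : ∀ i x, HasDerivAt (φ' i) (φ'' i x) x) (w d : Fin p → ℝ) (t : ℝ) :
    HasDerivAt (fun t : ℝ => glmGradient a ν φ' (w + t • d) ⬝ᵥ d)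
      (quadForm (glmHessian a ν φ'' (w + t • d)) d) t := by
  simp only [glmGradient_dotProduct, quadForm_glmHessian]
  have hlin : HasDerivAt (fun t : ℝ => (w + t • d) ⬝ᵥ d) (d ⬝ᵥ d) t := by
    simpa only [dotProduct_comm d] using hasDerivAt_dotProduct_add_smul d w d t
  have hsum := HasDerivAt.fun_sum (u := Finset.univ) fun i _ =>
    (hasDerivAt_comp_dotProduct_add_smul (hφ' i) (a i) w d t).mul_const (a i ⬝ᵥ d)
  refine ((hsum.const_mul _).fun_add (hlin.const_mul ν)).congr_deriv ?_
  simp only [dotProduct_comm d, sq, mul_assoc]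

end GLM

theorem curvature_ratio_bounds {ν u ℓ lam q s x y : ℝ} (hν : 0 < ν) (hℓ : 0 ≤ ℓ) (hℓu : ℓ ≤ u)
    (hlam : 0 ≤ lam) (hq : q ≤ lam * s)
    (hx : x ∈ Icc (ℓ * q + ν * s) (u * q + ν * s)) (hy : y ∈ Icc (ℓ * q + ν * s) (u * q + ν * s)) :
    (ℓ * lam + ν) / (u * lam + ν) * y ≤ x ∧ x ≤ (u * lam + ν) / (ℓ * lam + ν) * y := by
  have hℓ' : 0 < ℓ * lam + ν := by positivity
  have hu' : 0 < u * lam + ν := by nlinarith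
  -- the ratio `(u q + ν s) / (ℓ q + ν s)` increases with `q / s`, which is at most `lam`
  have hratio : (u * q + ν * s) * (ℓ * lam + ν) ≤ (ℓ * q + ν * s) * (u * lam + ν) := by
    linear_combination mul_nonneg (mul_nonneg hν.le (sub_nonneg.2 hℓu)) (sub_nonneg.2 hq)
  have hcross : ∀ x y, x ≤ u * q + ν * s → ℓ * q + ν * s ≤ y →
      x * (ℓ * lam + ν) ≤ y * (u * lam + ν) := fun x y hx hy => calc
      x * (ℓ * lam + ν) ≤ (u * q + ν * s) * (ℓ * lam + ν) := by gcongr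
      _ ≤ (ℓ * q + ν * s) * (u * lam + ν) := hratio
      _ ≤ y * (u * lam + ν) := by gcongr
  constructor
  · rw [div_mul_eq_mul_div, div_le_iff₀ hu', mul_comm]
    exact hcross y x hy.2 hx.1
  · rw [div_mul_eq_mul_div, le_div_iff₀ hℓ', mul_comm _ y]
    exact hcross x y hx.2 hy.1

theorem quadratic_regularity_of_glm_general {n p : ℕ}
    (a : Fin n → Fin p → ℝ) (φ φ' φ'' : Fin n → ℝ → ℝ)
    (hφ' : ∀ i x, HasDerivAt (φ i) (φ' i x) x)
    (hφ'' : ∀ i x, HasDerivAt (φ' i) (φ'' i x) x)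
    (C : Set (Fin p → ℝ)) (hCconv : Convex ℝ C)
    (ν u ℓ lam : ℝ) (hν : 0 < ν) (hℓ : 0 ≤ ℓ) (hℓu : ℓ ≤ u)
    (hbounds : ∀ i, ∀ w ∈ C, ℓ ≤ φ'' i (a i ⬝ᵥ w) ∧ φ'' i (a i ⬝ᵥ w) ≤ u)
    (hlam_ub : (lam • (1 : Matrix (Fin p) (Fin p) ℝ)
        - (n : ℝ)⁻¹ • ((Matrix.of a)ᵀ * Matrix.of a)).PosSemidef)
    (hlam_eig : ∃ v : Fin p → ℝ, v ≠ 0 ∧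
        ((n : ℝ)⁻¹ • ((Matrix.of a)ᵀ * Matrix.of a)).mulVec v = lam • v) :
    let F : (Fin p → ℝ) → ℝ := fun w => (n : ℝ)⁻¹ * ∑ i, φ i (a i ⬝ᵥ w) + ν / 2 * (w ⬝ᵥ w)
    let g : (Fin p → ℝ) → Fin p → ℝ := fun w =>
      (n : ℝ)⁻¹ • (∑ i, φ' i (a i ⬝ᵥ w) • a i) + ν • w
    let H : (Fin p → ℝ) → Matrix (Fin p) (Fin p) ℝ := fun w =>
      (n : ℝ)⁻¹ • (∑ i, φ'' i (a i ⬝ᵥ w) • vecMulVec (a i) (a i))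
        + ν • (1 : Matrix (Fin p) (Fin p) ℝ)
    ∀ w₀ ∈ C, ∀ w₁ ∈ C, ∀ w₂ ∈ C,
      F w₂ ≤ F w₁ + g w₁ ⬝ᵥ (w₂ - w₁)
          + ((u * lam + ν) / (ℓ * lam + ν)) / 2 * quadForm (H w₀) (w₂ - w₁) ∧
      F w₂ ≥ F w₁ + g w₁ ⬝ᵥ (w₂ - w₁)
          + ((ℓ * lam + ν) / (u * lam + ν)) / 2 * quadForm (H w₀) (w₂ - w₁) := by
  intro F g H w₀ hw₀ w₁ hw₁ w₂ hw₂
  obtain ⟨v, hv, hev⟩ := hlam_eig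
  have hlam : 0 ≤ lam :=
    nonneg_of_mulVec_eq_smul_of_quadForm_nonneg (quadForm_sampleCovariance_nonneg a) hv hev
  set d := w₂ - w₁ with hd
  have hcov : quadForm (sampleCovariance a) d ≤ lam * (d ⬝ᵥ d) := by
    have := quadForm_le_of_posSemidef_sub hlam_ub d
    rwa [quadForm_smul lam, quadForm_one] at this
  have hseg : ∀ t ∈ Icc (0 : ℝ) 1, w₁ + t • d ∈ C := fun t ht =>
    hCconv.add_smul_sub_mem hw₁ hw₂ ht
  have hcurv : ∀ t ∈ Icc (0 : ℝ) 1, _ := fun t ht =>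
    curvature_ratio_bounds hν hℓ hℓu hlam hcov
      (quadForm_glmHessian_mem_Icc a ν (fun i => hbounds i _ (hseg t ht)) d)
      (quadForm_glmHessian_mem_Icc a ν (fun i => hbounds i _ hw₀) d)
  have hF := hasDerivAt_glmObjective_add_smul (a := a) (ν := ν) hφ' w₁ d
  have hg := hasDerivAt_glmGradient_dotProduct_add_smul (a := a) (ν := ν) hφ'' w₁ d
  have hend : w₁ + (1 : ℝ) • d = w₂ := by rw [one_smul, hd, add_sub_cancel]
  have hupper := le_add_deriv_add_half_of_deriv2_le_s8 hF hg fun t ht => (hcurv t ht).2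
  have hlower := add_deriv_add_half_le_of_le_deriv2_s8 hF hg fun t ht => (hcurv t ht).1
  rw [zero_smul, add_zero, hend] at hupper hlower
  rw [div_mul_eq_mul_div _ 2, div_mul_eq_mul_div _ 2]
  exact ⟨hupper, hlower⟩

/-- Quadratic regularity of GLMs: if `F(w) = (1/n)∑ᵢ φᵢ(aᵢᵀw) + (ν/2)‖w‖²`, with
`Σ̂ = (1/n)AᵀA`, `lam = λ₁(Σ̂)` its largest eigenvalue,
`u = sup φ''` and `ℓ = inf φ''` over `C`, then `F` is quadratically regular on `C` with
`(ℓ·lam+ν)/(u·lam+ν) ≤ γℓ(C) ≤ γu(C) ≤ (u·lam+ν)/(ℓ·lam+ν)`: the upper quadratic regularity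
bound holds with constant `(u·lam+ν)/(ℓ·lam+ν)` and the lower with its reciprocal. -/
theorem quadratic_regularity_of_glm {n p : ℕ} (hn : 0 < n)
    (a : Fin n → Fin p → ℝ) (φ φ' φ'' : Fin n → ℝ → ℝ)
    (hφ' : ∀ i x, HasDerivAt (φ i) (φ' i x) x)
    (hφ'' : ∀ i x, HasDerivAt (φ' i) (φ'' i x) x)
    (hφconv : ∀ i x, 0 ≤ φ'' i x)
    (C : Set (Fin p → ℝ)) (hCconv : Convex ℝ C)
    (ν u ℓ lam : ℝ) (hν : 0 < ν) (hℓ : 0 ≤ ℓ) (hℓu : ℓ ≤ u)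
    (hbounds : ∀ i, ∀ w ∈ C, ℓ ≤ φ'' i (a i ⬝ᵥ w) ∧ φ'' i (a i ⬝ᵥ w) ≤ u)
    (hlam_ub : (lam • (1 : Matrix (Fin p) (Fin p) ℝ)
        - (n : ℝ)⁻¹ • ((Matrix.of a)ᵀ * Matrix.of a)).PosSemidef)
    (hlam_eig : ∃ v : Fin p → ℝ, v ≠ 0 ∧
        ((n : ℝ)⁻¹ • ((Matrix.of a)ᵀ * Matrix.of a)).mulVec v = lam • v) :
    let F : (Fin p → ℝ) → ℝ := fun w => (n : ℝ)⁻¹ * ∑ i, φ i (a i ⬝ᵥ w) + ν / 2 * (w ⬝ᵥ w)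
    let g : (Fin p → ℝ) → Fin p → ℝ := fun w =>
      (n : ℝ)⁻¹ • (∑ i, φ' i (a i ⬝ᵥ w) • a i) + ν • w
    let H : (Fin p → ℝ) → Matrix (Fin p) (Fin p) ℝ := fun w =>
      (n : ℝ)⁻¹ • (∑ i, φ'' i (a i ⬝ᵥ w) • vecMulVec (a i) (a i))
        + ν • (1 : Matrix (Fin p) (Fin p) ℝ)
    ∀ w₀ ∈ C, ∀ w₁ ∈ C, ∀ w₂ ∈ C,
      F w₂ ≤ F w₁ + g w₁ ⬝ᵥ (w₂ - w₁)
          + ((u * lam + ν) / (ℓ * lam + ν)) / 2 * quadForm (H w₀) (w₂ - w₁) ∧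
      F w₂ ≥ F w₁ + g w₁ ⬝ᵥ (w₂ - w₁)
          + ((ℓ * lam + ν) / (u * lam + ν)) / 2 * quadForm (H w₀) (w₂ - w₁) :=
  quadratic_regularity_of_glm_general a φ φ' φ'' hφ' hφ'' C hCconv ν u ℓ lam hν hℓ hℓu hbounds
    hlam_ub hlam_eig
end
end

section
/- Let F be a k-generalized self-concordant twice-differentiable strictly convex function on a compact convex set C of diameter D, meaning that for every w ∈ C and directions d, d', the function φ(t) = ‖d‖²_{∇²F(w+td')} satisfies φ'(t) ≤ k‖d'‖φ(t). Then the quadratic regularity constants of F on C satisfy exp(−kD) ≤ γ_ℓ(C) ≤ γ_u(C) ≤ exp(kD). -/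
/-! Along the segment from `w` to `w'`, self-concordance says `φ' ≤ k ‖w' - w‖ φ` for
`φ t = ‖v‖²_{∇²F(w + t (w' - w))}`, so Grönwall gives `∇²F(w') ≼ exp(kD) ∇²F(w)` on `C`.
Hence the second derivative of `t ↦ F(w₁ + t (w₂ - w₁))` on `[0, 1]` lies between
`exp(∓kD) ‖w₂ - w₁‖²_{∇²F(w₀)}`, and integrating twice gives both bounds. -/

open Matrix

noncomputable section

/-- The Euclidean norm of a vector in `ℝ^p`. -/
def euclNorm {p : ℕ} (v : Fin p → ℝ) : ℝ := Real.sqrt (v ⬝ᵥ v)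

open Set Real

lemma le_exp_mul_of_deriv_le_mul {φ φ' : ℝ → ℝ} {K : ℝ}
    (hφ : ∀ t ∈ Icc (0 : ℝ) 1, HasDerivAt φ (φ' t) t)
    (hbound : ∀ t ∈ Ico (0 : ℝ) 1, φ' t ≤ K * φ t) :
    φ 1 ≤ exp K * φ 0 := by
  have h := le_gronwallBound_of_liminf_deriv_right_le (δ := φ 0) (ε := 0)
    (fun t ht => (hφ t ht).continuousAt.continuousWithinAt)
    (fun t ht _ hr => by
      simpa only [slope_def_field, div_eq_inv_mul] using
        (hφ t (Ico_subset_Icc_self ht)).hasDerivWithinAt.liminf_right_slope_le hr)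
    le_rfl (fun t ht => by simpa using hbound t ht) 1 (right_mem_Icc.2 zero_le_one)
  simpa [gronwallBound_ε0, mul_comm] using h

lemma image_one_le_of_second_deriv_le {f f₁ f₂ : ℝ → ℝ} {M : ℝ}
    (hf : ∀ t ∈ Icc (0 : ℝ) 1, HasDerivAt f (f₁ t) t)
    (hf₁ : ∀ t ∈ Icc (0 : ℝ) 1, HasDerivAt f₁ (f₂ t) t)
    (hM : ∀ t ∈ Ico (0 : ℝ) 1, f₂ t ≤ M) :
    f 1 ≤ f 0 + f₁ 0 + M / 2 := by
  have hf₁_le : ∀ t ∈ Icc (0 : ℝ) 1, f₁ t ≤ f₁ 0 + M * t :=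
    image_le_of_deriv_right_le_deriv_boundary
      (fun t ht => (hf₁ t ht).continuousAt.continuousWithinAt)
      (fun t ht => (hf₁ t (Ico_subset_Icc_self ht)).hasDerivWithinAt)
      (by simp) (by fun_prop)
      (fun t _ => (((hasDerivAt_id t).const_mul M).const_add (f₁ 0)).hasDerivWithinAt)
      (by simpa using hM)
  have hf_le : f 1 ≤ f 0 + f₁ 0 * 1 + M * 1 ^ 2 / 2 :=
    image_le_of_deriv_right_le_deriv_boundary (B := fun t => f 0 + f₁ 0 * t + M * t ^ 2 / 2)
      (fun t ht => (hf t ht).continuousAt.continuousWithinAt)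
      (fun t ht => (hf t (Ico_subset_Icc_self ht)).hasDerivWithinAt)
      (by simp) (by fun_prop)
      (fun t _ => by
        have h := (((hasDerivAt_id t).const_mul (f₁ 0)).const_add (f 0)).add
          (((hasDerivAt_pow 2 t).const_mul M).div_const 2)
        exact (h.congr_deriv (by simp; ring)).hasDerivWithinAt)
      (fun t ht => hf₁_le t (Ico_subset_Icc_self ht)) (right_mem_Icc.2 zero_le_one)
  simpa using hf_le

lemma le_image_one_of_le_second_deriv {f f₁ f₂ : ℝ → ℝ} {m : ℝ}
    (hf : ∀ t ∈ Icc (0 : ℝ) 1, HasDerivAt f (f₁ t) t)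
    (hf₁ : ∀ t ∈ Icc (0 : ℝ) 1, HasDerivAt f₁ (f₂ t) t)
    (hm : ∀ t ∈ Ico (0 : ℝ) 1, m ≤ f₂ t) :
    f 0 + f₁ 0 + m / 2 ≤ f 1 := by
  have h := image_one_le_of_second_deriv_le (f := -f) (f₁ := -f₁) (M := -m)
    (fun t ht => (hf t ht).neg) (fun t ht => (hf₁ t ht).neg) (fun t ht => neg_le_neg (hm t ht))
  simp only [Pi.neg_apply] at h
  linarith

lemma HasFDerivAt.hasDerivAt_comp_add_smul {E G : Type*} [NormedAddCommGroup E]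
    [NormedSpace ℝ E] [NormedAddCommGroup G] [NormedSpace ℝ G] {f : E → G} {f' : E →L[ℝ] G}
    {w d : E} {t : ℝ} (hf : HasFDerivAt f f' (w + t • d)) :
    HasDerivAt (fun s : ℝ => f (w + s • d)) (f' d) t := by
  simpa [Function.comp_def] using
    hf.comp_hasDerivAt t (((hasDerivAt_id t).smul_const d).const_add w)

section

variable {p : ℕ}

lemma hasDerivAt_comp_add_smul_of_gradient {F : (Fin p → ℝ) → ℝ} {g : (Fin p → ℝ) → Fin p → ℝ}
    (hgrad : ∀ x, ∃ f' : (Fin p → ℝ) →L[ℝ] ℝ, HasFDerivAt F f' x ∧ ∀ v, f' v = g x ⬝ᵥ v)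
    (w d : Fin p → ℝ) (t : ℝ) :
    HasDerivAt (fun s => F (w + s • d)) (g (w + t • d) ⬝ᵥ d) t := by
  obtain ⟨f', hf, hf'⟩ := hgrad (w + t • d)
  simpa [hf'] using hf.hasDerivAt_comp_add_smul

lemma hasDerivAt_dotProduct_comp_add_smul_of_hessian {g : (Fin p → ℝ) → Fin p → ℝ}
    {H : (Fin p → ℝ) → Matrix (Fin p) (Fin p) ℝ}
    (hhess : ∀ x, ∃ g' : (Fin p → ℝ) →L[ℝ] (Fin p → ℝ),
      HasFDerivAt g g' x ∧ ∀ v, g' v = (H x).mulVec v)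
    (w d : Fin p → ℝ) (t : ℝ) :
    HasDerivAt (fun s => g (w + s • d) ⬝ᵥ d) (quadForm (H (w + t • d)) d) t := by
  obtain ⟨g', hg, hg'⟩ := hhess (w + t • d)
  have hcoord := hasDerivAt_pi.1 hg.hasDerivAt_comp_add_smul
  have hsum := HasDerivAt.fun_sum (u := Finset.univ) fun i _ => (hcoord i).mul_const (d i)
  simpa only [dotProduct, quadForm, hg', mul_comm (d _)] using hsum

lemma quadForm_le_exp_mul_quadForm {C : Set (Fin p → ℝ)} (hCconv : Convex ℝ C)
    {H : (Fin p → ℝ) → Matrix (Fin p) (Fin p) ℝ} {k : ℝ}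
    {ψ : (Fin p → ℝ) → (Fin p → ℝ) → (Fin p → ℝ) → ℝ → ℝ}
    (hψ : ∀ w d d' t, HasDerivAt (fun s => quadForm (H (w + s • d')) d) (ψ w d d' t) t)
    (hsc : ∀ w ∈ C, ∀ (d d' : Fin p → ℝ) (t : ℝ), w + t • d' ∈ C →
      ψ w d d' t ≤ k * euclNorm d' * quadForm (H (w + t • d')) d)
    {w w' : Fin p → ℝ} (hw : w ∈ C) (hw' : w' ∈ C) (v : Fin p → ℝ) :
    quadForm (H w') v ≤ exp (k * euclNorm (w' - w)) * quadForm (H w) v := by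
  simpa using le_exp_mul_of_deriv_le_mul (fun t _ => hψ w v (w' - w) t)
    (fun t ht => hsc w hw v _ t (hCconv.add_smul_sub_mem hw hw' (Ico_subset_Icc_self ht)))

end

theorem quadratic_regularity_of_self_concordant_general {p : ℕ}
    (C : Set (Fin p → ℝ)) (hCconv : Convex ℝ C)
    (F : (Fin p → ℝ) → ℝ) (g : (Fin p → ℝ) → Fin p → ℝ)
    (H : (Fin p → ℝ) → Matrix (Fin p) (Fin p) ℝ)
    (hgrad : ∀ x, ∃ f' : (Fin p → ℝ) →L[ℝ] ℝ, HasFDerivAt F f' x ∧ ∀ v, f' v = g x ⬝ᵥ v)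
    (hhess : ∀ x, ∃ g' : (Fin p → ℝ) →L[ℝ] (Fin p → ℝ),
      HasFDerivAt g g' x ∧ ∀ v, g' v = (H x).mulVec v)
    (hstrict : ∀ w ∈ C, (H w).PosDef)
    (k D : ℝ) (hk : 0 < k)
    (hdiam : ∀ w ∈ C, ∀ w' ∈ C, euclNorm (w - w') ≤ D)
    (ψ : (Fin p → ℝ) → (Fin p → ℝ) → (Fin p → ℝ) → ℝ → ℝ)
    (hψ : ∀ w d d' t, HasDerivAt (fun s => quadForm (H (w + s • d')) d) (ψ w d d' t) t)
    (hsc : ∀ w ∈ C, ∀ (d d' : Fin p → ℝ) (t : ℝ), w + t • d' ∈ C →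
      ψ w d d' t ≤ k * euclNorm d' * quadForm (H (w + t • d')) d) :
    ∀ w₀ ∈ C, ∀ w₁ ∈ C, ∀ w₂ ∈ C,
      F w₂ ≤ F w₁ + g w₁ ⬝ᵥ (w₂ - w₁)
          + Real.exp (k * D) / 2 * quadForm (H w₀) (w₂ - w₁) ∧
      F w₂ ≥ F w₁ + g w₁ ⬝ᵥ (w₂ - w₁)
          + Real.exp (-(k * D)) / 2 * quadForm (H w₀) (w₂ - w₁) := by
  have hcmp : ∀ w ∈ C, ∀ w' ∈ C, ∀ v,
      quadForm (H w') v ≤ exp (k * D) * quadForm (H w) v := fun w hw w' hw' v =>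
    (quadForm_le_exp_mul_quadForm hCconv hψ hsc hw hw' v).trans <|
      mul_le_mul_of_nonneg_right
        (exp_le_exp.2 (mul_le_mul_of_nonneg_left (hdiam w' hw' w hw) hk.le))
        (by simpa [quadForm] using (hstrict w hw).posSemidef.dotProduct_mulVec_nonneg v)
  intro w₀ hw₀ w₁ hw₁ w₂ hw₂
  have hseg : ∀ t ∈ Ico (0 : ℝ) 1, w₁ + t • (w₂ - w₁) ∈ C := fun t ht =>
    hCconv.add_smul_sub_mem hw₁ hw₂ (Ico_subset_Icc_self ht)
  have hF := fun t (_ : t ∈ Icc (0 : ℝ) 1) =>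
    hasDerivAt_comp_add_smul_of_gradient hgrad w₁ (w₂ - w₁) t
  have hg := fun t (_ : t ∈ Icc (0 : ℝ) 1) =>
    hasDerivAt_dotProduct_comp_add_smul_of_hessian hhess w₁ (w₂ - w₁) t
  have hlower : ∀ t ∈ Ico (0 : ℝ) 1, exp (-(k * D)) * quadForm (H w₀) (w₂ - w₁) ≤
      quadForm (H (w₁ + t • (w₂ - w₁))) (w₂ - w₁) := fun t ht => by
    rw [Real.exp_neg, inv_mul_le_iff₀ (exp_pos _)]
    exact hcmp _ (hseg t ht) w₀ hw₀ (w₂ - w₁)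
  have hupper := image_one_le_of_second_deriv_le hF hg
    (fun t ht => hcmp w₀ hw₀ _ (hseg t ht) (w₂ - w₁))
  have hlower := le_image_one_of_le_second_deriv hF hg hlower
  simp only [one_smul, zero_smul, add_zero, add_sub_cancel] at hupper hlower
  constructor <;> linarith

/-- Quadratic regularity of `k`-generalized self-concordant functions: if `F` is twice
differentiable and strictly convex on a compact convex set `C` of diameter `D`, and for all
`w ∈ C` and directions `d, d'`, the function `φ(t) = ‖d‖²_{∇²F(w+td')}` satisfies
`φ'(t) ≤ k‖d'‖φ(t)` (its derivative being `ψ w d d' t`), then `F` is quadratically regular on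
`C` with `exp(−kD) ≤ γℓ(C) ≤ γu(C) ≤ exp(kD)`: the upper quadratic regularity bound holds with
constant `exp(kD)` and the lower with `exp(−kD)`. -/
theorem quadratic_regularity_of_self_concordant {p : ℕ}
    (C : Set (Fin p → ℝ)) (hCcompact : IsCompact C) (hCconv : Convex ℝ C)
    (F : (Fin p → ℝ) → ℝ) (g : (Fin p → ℝ) → Fin p → ℝ)
    (H : (Fin p → ℝ) → Matrix (Fin p) (Fin p) ℝ)
    (hgrad : ∀ x, ∃ f' : (Fin p → ℝ) →L[ℝ] ℝ, HasFDerivAt F f' x ∧ ∀ v, f' v = g x ⬝ᵥ v)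
    (hhess : ∀ x, ∃ g' : (Fin p → ℝ) →L[ℝ] (Fin p → ℝ),
      HasFDerivAt g g' x ∧ ∀ v, g' v = (H x).mulVec v)
    (hstrict : ∀ w ∈ C, (H w).PosDef)
    (k D : ℝ) (hk : 0 < k) (hD : 0 ≤ D)
    (hdiam : ∀ w ∈ C, ∀ w' ∈ C, euclNorm (w - w') ≤ D)
    (ψ : (Fin p → ℝ) → (Fin p → ℝ) → (Fin p → ℝ) → ℝ → ℝ)
    (hψ : ∀ w d d' t, HasDerivAt (fun s => quadForm (H (w + s • d')) d) (ψ w d d' t) t)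
    (hsc : ∀ w ∈ C, ∀ (d d' : Fin p → ℝ) (t : ℝ), w + t • d' ∈ C →
      ψ w d d' t ≤ k * euclNorm d' * quadForm (H (w + t • d')) d) :
    ∀ w₀ ∈ C, ∀ w₁ ∈ C, ∀ w₂ ∈ C,
      F w₂ ≤ F w₁ + g w₁ ⬝ᵥ (w₂ - w₁)
          + Real.exp (k * D) / 2 * quadForm (H w₀) (w₂ - w₁) ∧
      F w₂ ≥ F w₁ + g w₁ ⬝ᵥ (w₂ - w₁)
          + Real.exp (-(k * D)) / 2 * quadForm (H w₀) (w₂ - w₁) :=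
  quadratic_regularity_of_self_concordant_general C hCconv F g H hgrad hhess hstrict k D hk hdiam ψ
    hψ hsc
end
end

section
/- Suppose A ∈ ℝ^{n×p} has singular values satisfying σⱼ(A)² ≤ C j^{−2β} for all 1 ≤ j ≤ p, where β ≥ 1 is an integer and C > 0, and let ν > 0. Then the effective dimension satisfies d_eff^ν(A) = ∑ⱼ σⱼ²(A)/(σⱼ²(A) + nν) ≤ (π/(2β))/sin(π/(2β)) · (C/(nν))^{1/(2β)}. -/
open Matrix

noncomputable section

theorem Matrix.isHermitian_transpose_mul_self {m k : Type*} [Fintype m] (A : Matrix m k ℝ) :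
    (Aᵀ * A).IsHermitian :=
  by simpa using Matrix.isHermitian_conjTranspose_mul_self A

/-!
Since `x ↦ x / (x + nν)` is increasing, the decay hypothesis bounds the `j`-th term of the
(sorted) sum by `f j`, where `f x = C / (C + nν x^{2β})`. As `f` is decreasing, the sum
`∑_{j=1}^p f j` is at most `∫₀^∞ f`, and scaling `x` reduces this integral to
`∫₀^∞ dx / (1 + x^m) = (π/m) / sin(π/m)` with `m = 2β > 1`, which is the Beta integral
`B(1/m, 1 - 1/m)` in disguise.
-/

open Real Set MeasureTheory

theorem integral_Ioo_rpow_mul_one_sub_rpow {a b : ℝ} (ha : 0 < a) (hb : 0 < b) :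
    ∫ s in Ioo (0 : ℝ) 1, s ^ (a - 1) * (1 - s) ^ (b - 1) =
      Gamma a * Gamma b / Gamma (a + b) := by
  have h := Complex.betaIntegral_eq_Gamma_mul_div a b (by simpa) (by simpa)
  rw [Complex.betaIntegral, intervalIntegral.integral_of_le zero_le_one,
    integral_Ioc_eq_integral_Ioo, ← Complex.ofReal_add, Complex.Gamma_ofReal,
    Complex.Gamma_ofReal, Complex.Gamma_ofReal] at h
  have hcongr :
      ∫ s in Ioo (0 : ℝ) 1, (s : ℂ) ^ ((a : ℂ) - 1) * (1 - (s : ℂ)) ^ ((b : ℂ) - 1) =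
        ∫ s in Ioo (0 : ℝ) 1, ((s ^ (a - 1) * (1 - s) ^ (b - 1) : ℝ) : ℂ) := by
    refine setIntegral_congr_fun measurableSet_Ioo fun s ⟨hs0, hs1⟩ ↦ ?_
    rw [Complex.ofReal_mul, Complex.ofReal_cpow hs0.le, Complex.ofReal_cpow (by linarith)]
    push_cast
    rfl
  rw [hcongr, integral_complex_ofReal] at h
  exact_mod_cast h

theorem integral_Ioo_rpow_mul_one_sub_rpow_neg {a : ℝ} (ha₀ : 0 < a) (ha₁ : a < 1) :
    ∫ s in Ioo (0 : ℝ) 1, s ^ (a - 1) * (1 - s) ^ (-a) = π / sin (π * a) := by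
  have h := integral_Ioo_rpow_mul_one_sub_rpow ha₀ (sub_pos.2 ha₁)
  rw [add_sub_cancel, Gamma_one, div_one, Gamma_mul_Gamma_one_sub, sub_sub_cancel_left] at h
  exact h

theorem image_div_one_sub_Ioo : (fun s : ℝ ↦ s / (1 - s)) '' Ioo 0 1 = Ioi 0 := by
  ext x
  constructor
  · rintro ⟨s, ⟨hs0, hs1⟩, rfl⟩
    exact div_pos hs0 (sub_pos.2 hs1)
  · intro (hx : 0 < x)
    refine ⟨x / (1 + x), ⟨by positivity, (div_lt_one (by positivity)).2 (by linarith)⟩, ?_⟩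
    field_simp
    ring

/-- The substitution `x = s / (1 - s)` turns this Mellin integral into the Beta integral
`B(a, 1 - a) = Γ(a) Γ(1 - a)`, which the reflection formula evaluates. -/
theorem integral_Ioi_rpow_div_one_add {a : ℝ} (ha₀ : 0 < a) (ha₁ : a < 1) :
    ∫ x in Ioi (0 : ℝ), x ^ (a - 1) / (1 + x) = π / sin (π * a) := by
  have hderiv : ∀ s ∈ Ioo (0 : ℝ) 1,
      HasDerivWithinAt (fun s ↦ s / (1 - s)) (((1 - s) ^ 2)⁻¹) (Ioo 0 1) s := by
    intro s ⟨_, hs1⟩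
    have h1s := (sub_pos.2 hs1).ne'
    refine ((hasDerivAt_id' s).div ((hasDerivAt_const s 1).sub (hasDerivAt_id' s))
      h1s).hasDerivWithinAt.congr_deriv ?_
    simp only [Pi.sub_apply]
    field_simp
    ring
  have hinj : InjOn (fun s : ℝ ↦ s / (1 - s)) (Ioo 0 1) := by
    intro s ⟨_, hs1⟩ t ⟨_, ht1⟩ h
    have := sub_pos.2 hs1
    have := sub_pos.2 ht1
    field_simp at h
    linarith
  rw [← image_div_one_sub_Ioo,
    integral_image_eq_integral_abs_deriv_smul measurableSet_Ioo hderiv hinj,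
    ← integral_Ioo_rpow_mul_one_sub_rpow_neg ha₀ ha₁]
  refine setIntegral_congr_fun measurableSet_Ioo fun s ⟨hs0, hs1⟩ ↦ ?_
  have h1s : 0 < 1 - s := sub_pos.2 hs1
  have hsum : 1 + s / (1 - s) = (1 - s)⁻¹ := by field_simp; ring
  have hpow : (1 - s) ^ (-a) = ((1 - s) ^ (a - 1) * (1 - s))⁻¹ := by
    rw [← rpow_add_one h1s.ne', sub_add_cancel, rpow_neg h1s.le]
  rw [hsum, smul_eq_mul, abs_of_pos (by positivity), div_rpow hs0.le h1s.le, hpow]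
  field_simp

theorem sin_pi_div_pos {m : ℝ} (hm : 1 < m) : 0 < sin (π / m) :=
  sin_pos_of_pos_of_lt_pi (by positivity) (div_lt_self pi_pos hm)

-- Substituting `y = x ^ m` reduces to the Mellin integral above with exponent `a = 1 / m`.
theorem integral_Ioi_one_div_one_add_rpow {m : ℝ} (hm : 1 < m) :
    ∫ x in Ioi (0 : ℝ), 1 / (1 + x ^ m) = π / m / sin (π / m) := by
  have hm₀ : 0 < m := by linarith
  have h := integral_comp_rpow_Ioi (fun y ↦ m⁻¹ * (y ^ (m⁻¹ - 1) / (1 + y))) hm₀.ne'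
  rw [integral_const_mul,
    integral_Ioi_rpow_div_one_add (by positivity) (inv_lt_one_of_one_lt₀ hm)] at h
  have hrhs : π / m / sin (π / m) = m⁻¹ * (π / sin (π * m⁻¹)) := by
    rw [← div_eq_mul_inv]
    ring
  rw [hrhs, ← h]
  refine setIntegral_congr_fun measurableSet_Ioi fun x (hx : 0 < x) ↦ ?_
  have hcancel : x ^ (m - 1) * (x ^ m) ^ (m⁻¹ - 1) = 1 := by
    rw [← rpow_mul hx.le, ← rpow_add hx, mul_sub, mul_inv_cancel₀ hm₀.ne']
    simp
  rw [smul_eq_mul, abs_of_pos hm₀]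
  generalize (x ^ m) ^ (m⁻¹ - 1) = y at hcancel ⊢
  field_simp
  linear_combination -hcancel

theorem integral_Ioi_div_add_mul_rpow {m C T : ℝ} (hm : 1 < m) (hC : 0 < C) (hT : 0 < T) :
    ∫ x in Ioi (0 : ℝ), C / (C + T * x ^ m) = π / m / sin (π / m) * (C / T) ^ m⁻¹ := by
  have hm₀ : 0 < m := by linarith
  set b := (T / C) ^ m⁻¹
  have hb : 0 < b := by positivity
  have hscale : ∀ x ∈ Ioi (0 : ℝ), C / (C + T * x ^ m) = 1 / (1 + (b * x) ^ m) := by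
    intro x (hx : 0 < x)
    rw [mul_rpow hb.le hx.le, ← rpow_mul (by positivity), inv_mul_cancel₀ hm₀.ne', rpow_one]
    field_simp
  rw [setIntegral_congr_fun measurableSet_Ioi hscale,
    integral_comp_mul_left_Ioi (fun x ↦ 1 / (1 + x ^ m)) 0 hb, mul_zero,
    integral_Ioi_one_div_one_add_rpow hm, smul_eq_mul, mul_comm, ← inv_rpow (by positivity),
    inv_div]

theorem integrableOn_Ioi_div_add_mul_rpow {m C T : ℝ} (hm : 1 < m) (hC : 0 < C) (hT : 0 < T) :
    IntegrableOn (fun x ↦ C / (C + T * x ^ m)) (Ioi 0) := by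
  have := sin_pi_div_pos hm
  have : 0 < m := by linarith
  -- a non-integrable function would have Bochner integral `0`
  exact .of_integral_ne_zero (by rw [integral_Ioi_div_add_mul_rpow hm hC hT]; positivity)

theorem AntitoneOn.sum_fin_le_integral_Ioi {f : ℝ → ℝ} (hf : AntitoneOn f (Ici 0))
    (hf₀ : ∀ x ∈ Ioi (0 : ℝ), 0 ≤ f x) (hfi : IntegrableOn f (Ioi 0)) (p : ℕ) :
    ∑ j : Fin p, f (j + 1) ≤ ∫ x in Ioi 0, f x := by
  have hsum := (hf.mono Icc_subset_Ici_self).sum_le_integral (x₀ := 0) (a := p)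
  simp only [zero_add, Nat.cast_add, Nat.cast_one] at hsum
  rw [Fin.sum_univ_eq_sum_range (fun j ↦ f (j + 1))]
  refine hsum.trans ?_
  rw [intervalIntegral.integral_of_le p.cast_nonneg]
  exact setIntegral_mono_set hfi (ae_restrict_of_forall_mem measurableSet_Ioi hf₀)
    Ioc_subset_Ioi_self.eventuallyLE

theorem div_add_le_div_add {a b T : ℝ} (ha : 0 ≤ a) (hab : a ≤ b) (hT : 0 < T) :
    a / (a + T) ≤ b / (b + T) := by
  rw [div_le_div_iff₀ (by positivity) (by linarith)]
  nlinarith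

theorem div_add_le_of_le_mul_rpow_neg {a C T x m : ℝ} (ha : 0 ≤ a) (hT : 0 < T) (hx : 0 < x)
    (h : a ≤ C * x ^ (-m)) : a / (a + T) ≤ C / (C + T * x ^ m) := by
  have hxm : 0 < x ^ m := rpow_pos_of_pos hx m
  calc a / (a + T) ≤ C * x ^ (-m) / (C * x ^ (-m) + T) := div_add_le_div_add ha h hT
    _ = C / (C + T * x ^ m) := by
      rw [rpow_neg hx.le]
      field_simp

theorem sum_div_add_le_of_le_mul_rpow_neg {p : ℕ} {m C T : ℝ} (hm : 1 < m) (hC : 0 < C)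
    (hT : 0 < T) (a : Fin p → ℝ) (ha : ∀ j, 0 ≤ a j)
    (hdecay : ∀ j : Fin p, a j ≤ C * ((j : ℝ) + 1) ^ (-m)) :
    ∑ j, a j / (a j + T) ≤ π / m / sin (π / m) * (C / T) ^ m⁻¹ := by
  have hanti : AntitoneOn (fun x ↦ C / (C + T * x ^ m)) (Ici 0) := by
    intro x (hx : 0 ≤ x) y _ hxy
    have := rpow_nonneg hx m
    dsimp only
    gcongr
  calc ∑ j, a j / (a j + T) ≤ ∑ j : Fin p, C / (C + T * ((j : ℝ) + 1) ^ m) :=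
        Finset.sum_le_sum fun j _ ↦ div_add_le_of_le_mul_rpow_neg (ha j) hT (by positivity)
          (hdecay j)
    _ ≤ ∫ x in Ioi 0, C / (C + T * x ^ m) :=
        hanti.sum_fin_le_integral_Ioi
          (fun x (hx : 0 < x) ↦ by have := rpow_nonneg hx.le m; positivity)
          (integrableOn_Ioi_div_add_mul_rpow hm hC hT) p
    _ = π / m / sin (π / m) * (C / T) ^ m⁻¹ := integral_Ioi_div_add_mul_rpow hm hC hT

/-- Effective dimension under polynomial spectral decay: if the squared singular values of `A`
(the eigenvalues of `AᵀA`), arranged via a permutation `e`, satisfy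
`σⱼ²(A) ≤ C·j^{−2β}` for `j = 1, …, p` with integer `β ≥ 1`, then for `ν > 0`,
`d_eff^ν(A) = ∑ⱼ σⱼ²/(σⱼ² + nν) ≤ (π/(2β))/sin(π/(2β)) · (C/(nν))^{1/(2β)}`. -/
theorem effective_dimension_polynomial_decay {n p : ℕ} (hn : 0 < n)
    (A : Matrix (Fin n) (Fin p) ℝ)
    (β : ℕ) (hβ : 1 ≤ β) (Cc ν : ℝ) (hC : 0 < Cc) (hν : 0 < ν)
    (e : Equiv.Perm (Fin p))
    (hdecay : ∀ j : Fin p,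
      (Matrix.isHermitian_transpose_mul_self A).eigenvalues (e j)
        ≤ Cc * ((j : ℝ) + 1) ^ (-(2 * (β : ℝ)))) :
    ∑ j, (Matrix.isHermitian_transpose_mul_self A).eigenvalues j /
        ((Matrix.isHermitian_transpose_mul_self A).eigenvalues j + (n : ℝ) * ν)
      ≤ (Real.pi / (2 * (β : ℝ))) / Real.sin (Real.pi / (2 * (β : ℝ)))
          * (Cc / ((n : ℝ) * ν)) ^ ((1 : ℝ) / (2 * (β : ℝ))) := by
  have hm : (1 : ℝ) < 2 * β := by
    have : (1 : ℝ) ≤ β := by exact_mod_cast hβ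
    linarith
  rw [← Equiv.sum_comp e, one_div]
  exact sum_div_add_le_of_le_mul_rpow_neg hm hC (mul_pos (Nat.cast_pos.2 hn) hν) _
    (fun j ↦ eigenvalues_conjTranspose_mul_self_nonneg A (e j)) hdecay
end
end

section
/- Let F(w) = (1/n)∑ᵢ φᵢ(aᵢᵀw) + (ν/2)‖w‖² be a GLM with ν > 0, each φᵢ twice differentiable convex with sup_x φᵢ''(x) ≤ B. Then the Hessian dissimilarity satisfies τ⋆^ν ≤ 1 + χ⋆^ν · d_eff^{ν/B}(A), where χ⋆^ν = sup_w χ^ν(Φ''(Aw)^{1/2}A) is the global ridge leverage coherence. -/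
/-!
The Hessian of `fᵢ` is the rank-one matrix `φᵢ'' aᵢaᵢᵀ`. Cauchy–Schwarz in the inner product of
`M = AᵀΦ''A + nνI` gives `φᵢ'' aᵢaᵢᵀ ⪯ lᵢ M`, where `lᵢ` is the `i`-th ridge leverage score, hence
`∇²fᵢ + νI ⪯ (1 + n lᵢ)(∇²f + νI)`. By definition of the coherence `n lᵢ ≤ χ ∑ⱼ lⱼ`, and
`∑ⱼ lⱼ = tr(M⁻¹AᵀΦ''A) = p − nν tr M⁻¹` is at most `d_eff^{ν/B}(A)` because `M ⪯ B(AᵀA + n(ν/B)I)`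
and the trace of the inverse is antitone in the Loewner order.
-/

open Matrix
open scoped MatrixOrder

namespace Matrix

section PosDef

variable {m : Type*} [Fintype m] [DecidableEq m]

lemma PosSemidef.dotProduct_mulVec_sq_le {M : Matrix m m ℝ} (hM : M.PosSemidef) (x y : m → ℝ) :
    (x ⬝ᵥ M *ᵥ y) ^ 2 ≤ (x ⬝ᵥ M *ᵥ x) * (y ⬝ᵥ M *ᵥ y) := by
  have hsymm : y ⬝ᵥ M *ᵥ x = x ⬝ᵥ M *ᵥ y := by
    rw [dotProduct_mulVec, ← mulVec_transpose, ← conjTranspose_eq_transpose_of_trivial,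
      hM.isHermitian.eq, dotProduct_comm]
  have hCS := LinearMap.BilinForm.apply_mul_apply_le_of_forall_zero_le (toLinearMap₂' ℝ M)
    (fun z => by simpa [toLinearMap₂'_apply'] using hM.dotProduct_mulVec_nonneg z) x y
  simpa only [toLinearMap₂'_apply', hsymm, sq] using hCS

lemma PosDef.mulVec_inv_mulVec {M : Matrix m m ℝ} (hM : M.PosDef) (v : m → ℝ) :
    M *ᵥ (M⁻¹ *ᵥ v) = v := by
  rw [mulVec_mulVec, mul_nonsing_inv _ ((isUnit_iff_isUnit_det _).1 hM.isUnit), one_mulVec]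

lemma PosDef.sq_dotProduct_le {M : Matrix m m ℝ} (hM : M.PosDef) (v x : m → ℝ) :
    (v ⬝ᵥ x) ^ 2 ≤ (v ⬝ᵥ M⁻¹ *ᵥ v) * (x ⬝ᵥ M *ᵥ x) := by
  have hCS := hM.posSemidef.dotProduct_mulVec_sq_le x (M⁻¹ *ᵥ v)
  rwa [hM.mulVec_inv_mulVec, dotProduct_comm (M⁻¹ *ᵥ v), dotProduct_comm x, mul_comm] at hCS

lemma PosDef.vecMulVec_le_smul {M : Matrix m m ℝ} (hM : M.PosDef) (v : m → ℝ) :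
    vecMulVec v v ≤ (v ⬝ᵥ M⁻¹ *ᵥ v) • M := by
  refine PosSemidef.of_dotProduct_mulVec_nonneg ((hM.isHermitian.smul (IsSelfAdjoint.all _)).sub
    (posSemidef_vecMulVec_self_star v).isHermitian) fun x => ?_
  have h := hM.sq_dotProduct_le v x
  simp only [star_trivial, sub_mulVec, smul_mulVec, dotProduct_sub, dotProduct_smul,
    vecMulVec_mulVec, op_smul_eq_smul, smul_eq_mul]
  rw [dotProduct_comm x v, ← sq]
  linarith

lemma PosDef.dotProduct_inv_mulVec_nonneg {M : Matrix m m ℝ} (hM : M.PosDef) (v : m → ℝ) :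
    0 ≤ v ⬝ᵥ M⁻¹ *ᵥ v := by
  simpa using hM.inv.posSemidef.dotProduct_mulVec_nonneg v

lemma PosDef.dotProduct_inv_mulVec_le {X Y : Matrix m m ℝ} (hX : X.PosDef) (hXY : X ≤ Y)
    (z : m → ℝ) : z ⬝ᵥ Y⁻¹ *ᵥ z ≤ z ⬝ᵥ X⁻¹ *ᵥ z := by
  have hY : Y.PosDef := by simpa using hX.add_posSemidef hXY
  set u := Y⁻¹ *ᵥ z
  have hzu : z ⬝ᵥ u = u ⬝ᵥ Y *ᵥ u := by rw [hY.mulVec_inv_mulVec, dotProduct_comm]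
  have hXu : u ⬝ᵥ X *ᵥ u ≤ u ⬝ᵥ Y *ᵥ u := by
    have := hXY.dotProduct_mulVec_nonneg u
    simp only [star_trivial, sub_mulVec, dotProduct_sub] at this
    linarith
  -- Cauchy–Schwarz: `(z ⬝ u)² ≤ (z ⬝ X⁻¹ z) (u ⬝ X u) ≤ (z ⬝ X⁻¹ z) (z ⬝ u)`.
  have hCS := hX.sq_dotProduct_le z u
  have hu : 0 ≤ z ⬝ᵥ u := hzu ▸ by simpa using hY.posSemidef.dotProduct_mulVec_nonneg u
  nlinarith [hX.dotProduct_inv_mulVec_nonneg z]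

lemma PosDef.inv_anti {X Y : Matrix m m ℝ} (hX : X.PosDef) (hXY : X ≤ Y) : Y⁻¹ ≤ X⁻¹ := by
  have hY : Y.PosDef := by simpa using hX.add_posSemidef hXY
  exact PosSemidef.of_dotProduct_mulVec_nonneg (hX.isHermitian.inv.sub hY.isHermitian.inv)
    fun z => by simpa [sub_mulVec] using hX.dotProduct_inv_mulVec_le hXY z

lemma PosDef.trace_inv_anti {X Y : Matrix m m ℝ} (hX : X.PosDef) (hXY : X ≤ Y) :
    Y⁻¹.trace ≤ X⁻¹.trace := by
  simpa [trace_sub] using (hX.inv_anti hXY).trace_nonneg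

end PosDef

section Ridge

variable {m ι : Type*} [Fintype ι] [DecidableEq ι]

lemma conjTranspose_of_mul_diagonal_mul_of (a : ι → m → ℝ) (d : ι → ℝ) :
    (of a)ᴴ * diagonal d * of a = ∑ k, d k • vecMulVec (a k) (a k) := by
  ext i j
  rw [mul_apply]
  simp [mul_diagonal, vecMulVec_apply, Matrix.sum_apply, mul_comm, mul_left_comm]

variable [Fintype m]

lemma sum_mul_dotProduct_mulVec_eq_trace (a : ι → m → ℝ) (d : ι → ℝ) (P : Matrix m m ℝ) :
    ∑ k, d k * (a k ⬝ᵥ P *ᵥ a k) = (P * ((of a)ᴴ * diagonal d * of a)).trace := by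
  simp only [conjTranspose_of_mul_diagonal_mul_of, Matrix.mul_sum, Matrix.mul_smul, mul_vecMulVec,
    trace_sum, trace_smul, trace_vecMulVec, smul_eq_mul, dotProduct_comm (a _)]

variable [DecidableEq m]

lemma posDef_conjTranspose_of_mul_diagonal_mul_of_add_smul_one (a : ι → m → ℝ) {d : ι → ℝ}
    (hd : 0 ≤ d) {c : ℝ} (hc : 0 < c) : ((of a)ᴴ * diagonal d * of a + c • 1).PosDef :=
  PosDef.posSemidef_add ((PosSemidef.diagonal hd).conjTranspose_mul_mul_same (of a))
    (PosDef.one.smul hc)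

lemma sum_mul_dotProduct_inv_mulVec_eq (a : ι → m → ℝ) (d : ι → ℝ) (c : ℝ)
    (h : IsUnit ((of a)ᴴ * diagonal d * of a + c • 1)) :
    ∑ k, d k * (a k ⬝ᵥ ((of a)ᴴ * diagonal d * of a + c • 1)⁻¹ *ᵥ a k) =
      (Fintype.card m : ℝ) - c * ((of a)ᴴ * diagonal d * of a + c • 1)⁻¹.trace := by
  set M := (of a)ᴴ * diagonal d * of a + c • 1
  rw [sum_mul_dotProduct_mulVec_eq_trace, show (of a)ᴴ * diagonal d * of a = M - c • 1 by
    rw [add_sub_cancel_right], Matrix.mul_sub, nonsing_inv_mul _ ((isUnit_iff_isUnit_det _).1 h),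
    Matrix.mul_smul, Matrix.mul_one, trace_sub, trace_smul, trace_one, smul_eq_mul]

lemma sum_mul_dotProduct_inv_mulVec_mono (a : ι → m → ℝ) {d d' : ι → ℝ} (hd : 0 ≤ d)
    (hdd' : d ≤ d') {c : ℝ} (hc : 0 < c) :
    ∑ k, d k * (a k ⬝ᵥ ((of a)ᴴ * diagonal d * of a + c • 1)⁻¹ *ᵥ a k) ≤
      ∑ k, d' k * (a k ⬝ᵥ ((of a)ᴴ * diagonal d' * of a + c • 1)⁻¹ *ᵥ a k) := by
  have hM := posDef_conjTranspose_of_mul_diagonal_mul_of_add_smul_one a hd hc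
  have hle : (of a)ᴴ * diagonal d * of a + c • 1 ≤ (of a)ᴴ * diagonal d' * of a + c • 1 := by
    rw [le_iff, add_sub_add_right_eq_sub, ← Matrix.sub_mul, ← Matrix.mul_sub, diagonal_sub]
    exact (PosSemidef.diagonal (sub_nonneg.2 hdd')).conjTranspose_mul_mul_same (of a)
  rw [sum_mul_dotProduct_inv_mulVec_eq a d c hM.isUnit,
    sum_mul_dotProduct_inv_mulVec_eq a d' c
      (posDef_conjTranspose_of_mul_diagonal_mul_of_add_smul_one a (hd.trans hdd') hc).isUnit]
  gcongr
  simpa using hM.trace_inv_anti hle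

lemma sum_const_mul_dotProduct_inv_mulVec (a : ι → m → ℝ) {B c : ℝ} (hB : 0 < B) (hc : 0 < c) :
    ∑ k, B * (a k ⬝ᵥ ((of a)ᴴ * diagonal (fun _ : ι => B) * of a + c • 1)⁻¹ *ᵥ a k) =
      ∑ k, a k ⬝ᵥ ((of a)ᴴ * of a + (c / B) • 1)⁻¹ *ᵥ a k := by
  have hMB : (of a)ᴴ * diagonal (fun _ : ι => B) * of a + c • 1 =
      B • ((of a)ᴴ * of a + (c / B) • 1) := by
    rw [smul_add, smul_smul, mul_div_cancel₀ _ hB.ne', ← smul_one_eq_diagonal, Matrix.mul_smul,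
      Matrix.mul_one, Matrix.smul_mul]
  have hN : ((of a)ᴴ * of a + (c / B) • 1).PosDef := by
    have := hMB ▸ posDef_conjTranspose_of_mul_diagonal_mul_of_add_smul_one a
      (fun _ => hB.le : 0 ≤ fun _ : ι => B) hc
    simpa [hB.ne'] using this.smul (inv_pos.2 hB)
  have hinv : (B • ((of a)ᴴ * of a + (c / B) • 1))⁻¹ = B⁻¹ • ((of a)ᴴ * of a + (c / B) • 1)⁻¹ :=
    inv_eq_left_inv (by rw [smul_mul_smul_comm, inv_mul_cancel₀ hB.ne',
      nonsing_inv_mul _ ((isUnit_iff_isUnit_det _).1 hN.isUnit), one_smul])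
  simp only [hMB, hinv, smul_mulVec, dotProduct_smul, smul_eq_mul, ← mul_assoc,
    mul_inv_cancel₀ hB.ne', one_mul]

lemma sum_mul_dotProduct_inv_mulVec_le (a : ι → m → ℝ) {d : ι → ℝ} {B c : ℝ}
    (hd : 0 ≤ d) (hdB : ∀ k, d k ≤ B) (hB : 0 < B) (hc : 0 < c) :
    ∑ k, d k * (a k ⬝ᵥ ((of a)ᴴ * diagonal d * of a + c • 1)⁻¹ *ᵥ a k) ≤
      ∑ k, a k ⬝ᵥ ((of a)ᴴ * of a + (c / B) • 1)⁻¹ *ᵥ a k :=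
  sum_const_mul_dotProduct_inv_mulVec a hB hc ▸ sum_mul_dotProduct_inv_mulVec_mono a hd hdB hc

lemma smul_vecMulVec_add_smul_one_le (a : ι → m → ℝ) {d : ι → ℝ} (hd : 0 ≤ d) {c ν s : ℝ}
    (hc : 0 < c) (hν : 0 < ν) (i : ι)
    (hs : c * (d i * (a i ⬝ᵥ ((of a)ᴴ * diagonal d * of a + (c * ν) • 1)⁻¹ *ᵥ a i)) ≤ s) :
    d i • vecMulVec (a i) (a i) + ν • 1 ≤
      (1 + s) • (c⁻¹ • ((of a)ᴴ * diagonal d * of a) + ν • 1) := by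
  set G := (of a)ᴴ * diagonal d * of a
  have hG : 0 ≤ G := ((PosSemidef.diagonal hd).conjTranspose_mul_mul_same (of a)).nonneg
  have hM := posDef_conjTranspose_of_mul_diagonal_mul_of_add_smul_one a hd (mul_pos hc hν)
  have hrank : d i • vecMulVec (a i) (a i) ≤ (s / c) • (G + (c * ν) • 1) := by
    calc d i • vecMulVec (a i) (a i)
        ≤ d i • ((a i ⬝ᵥ (G + (c * ν) • 1)⁻¹ *ᵥ a i) • (G + (c * ν) • 1)) :=
          smul_le_smul_of_nonneg_left (hM.vecMulVec_le_smul (a i)) (hd i)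
      _ ≤ (s / c) • (G + (c * ν) • 1) := by
          rw [smul_smul]
          exact smul_le_smul_of_nonneg_right ((le_div_iff₀' hc).2 hs) hM.posSemidef.nonneg
  calc d i • vecMulVec (a i) (a i) + ν • 1
      ≤ (s / c) • (G + (c * ν) • 1) + c⁻¹ • G + ν • 1 :=
        add_le_add_left (hrank.trans (le_add_of_nonneg_right
          (smul_nonneg (inv_nonneg.2 hc.le) hG))) _
    _ = (1 + s) • (c⁻¹ • G + ν • 1) := by
        match_scalars <;> field_simp <;> ring

end Ridge

end Matrix

lemma div_sum_mul_iSup_nonneg {ι : Type*} [Fintype ι] {l : ι → ℝ} (hl : 0 ≤ l) {c : ℝ}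
    (hc : 0 ≤ c) : 0 ≤ c / (∑ j, l j) * ⨆ j, l j :=
  mul_nonneg (div_nonneg hc (Finset.sum_nonneg fun j _ => hl j)) (Real.iSup_nonneg hl)

lemma mul_le_of_div_sum_mul_iSup_le {ι : Type*} [Fintype ι] {l : ι → ℝ} (hl : 0 ≤ l)
    {c χ D : ℝ} (hc : 0 ≤ c) (hχ : c / (∑ j, l j) * ⨆ j, l j ≤ χ) (hD : ∑ j, l j ≤ D) (i : ι) :
    c * l i ≤ χ * D := by
  have hχ0 := (div_sum_mul_iSup_nonneg hl hc).trans hχ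
  have hsum : 0 ≤ ∑ j, l j := Finset.sum_nonneg fun j _ => hl j
  rcases hsum.eq_or_lt with hzero | hpos
  · have hli : l i = 0 :=
      (Finset.sum_eq_zero_iff_of_nonneg fun j _ => hl j).1 hzero.symm i (Finset.mem_univ i)
    rw [hli, mul_zero]
    exact mul_nonneg hχ0 (hsum.trans hD)
  · calc c * l i ≤ c * ⨆ j, l j :=
          mul_le_mul_of_nonneg_left (le_ciSup (Set.finite_range l).bddAbove i) hc
      _ = (c / (∑ j, l j) * ⨆ j, l j) * ∑ j, l j := by field_simp
      _ ≤ χ * ∑ j, l j := mul_le_mul_of_nonneg_right hχ hpos.le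
      _ ≤ χ * D := mul_le_mul_of_nonneg_left hD hχ0

lemma Real.sInf_le_of_mem_of_nonneg {s : Set ℝ} {a : ℝ} (ha : a ∈ s) (h0 : 0 ≤ a) :
    sInf s ≤ a := by
  by_cases hs : BddBelow s
  · exact csInf_le hs ha
  · rwa [Real.sInf_of_not_bddBelow hs]

theorem hessian_dissimilarity_glm_general {n p : ℕ} (hn : 0 < n)
    (a : Fin n → Fin p → ℝ) (φ'' : Fin n → ℝ → ℝ)
    (B ν : ℝ) (hB : 0 < B) (hν : 0 < ν)
    (hφnn : ∀ i x, 0 ≤ φ'' i x) (hφB : ∀ i x, φ'' i x ≤ B)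
    (χstar : ℝ)
    (hχ : ∀ w : Fin p → ℝ,
      ((n : ℝ) / ∑ i, φ'' i (a i ⬝ᵥ w) *
          (a i ⬝ᵥ ((Matrix.of a)ᴴ * Matrix.diagonal (fun j => φ'' j (a j ⬝ᵥ w)) * Matrix.of a
              + ((n : ℝ) * ν) • (1 : Matrix (Fin p) (Fin p) ℝ))⁻¹.mulVec (a i)))
        * (⨆ i : Fin n, φ'' i (a i ⬝ᵥ w) *
            (a i ⬝ᵥ ((Matrix.of a)ᴴ * Matrix.diagonal (fun j => φ'' j (a j ⬝ᵥ w)) * Matrix.of a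
                + ((n : ℝ) * ν) • (1 : Matrix (Fin p) (Fin p) ℝ))⁻¹.mulVec (a i)))
        ≤ χstar) :
    sInf {t : ℝ | ∀ (w : Fin p → ℝ) (i : Fin n),
        (t • ((n : ℝ)⁻¹ • ((Matrix.of a)ᴴ * Matrix.diagonal (fun j => φ'' j (a j ⬝ᵥ w))
                * Matrix.of a) + ν • (1 : Matrix (Fin p) (Fin p) ℝ))
          - (φ'' i (a i ⬝ᵥ w) • vecMulVec (a i) (a i)
                + ν • (1 : Matrix (Fin p) (Fin p) ℝ))).PosSemidef}
      ≤ 1 + χstar * ∑ i, a i ⬝ᵥ ((Matrix.of a)ᴴ * Matrix.of a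
          + ((n : ℝ) * (ν / B)) • (1 : Matrix (Fin p) (Fin p) ℝ))⁻¹.mulVec (a i) := by
  have hn' : (0 : ℝ) < n := Nat.cast_pos.2 hn
  have hd : ∀ w : Fin p → ℝ, 0 ≤ fun j => φ'' j (a j ⬝ᵥ w) := fun w j => hφnn j _
  have hlev : ∀ w : Fin p → ℝ, 0 ≤ fun i => φ'' i (a i ⬝ᵥ w) *
      (a i ⬝ᵥ ((of a)ᴴ * diagonal (fun j => φ'' j (a j ⬝ᵥ w)) * of a
        + ((n : ℝ) * ν) • 1)⁻¹ *ᵥ a i) := fun w i =>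
    mul_nonneg (hφnn i _) ((posDef_conjTranspose_of_mul_diagonal_mul_of_add_smul_one a (hd w)
      (mul_pos hn' hν)).dotProduct_inv_mulVec_nonneg _)
  have hsum := fun w => by
    simpa only [mul_div_assoc] using
      sum_mul_dotProduct_inv_mulVec_le a (hd w) (fun k => hφB k _) hB (mul_pos hn' hν)
  have hχ0 : 0 ≤ χstar := (div_sum_mul_iSup_nonneg (hlev 0) hn'.le).trans (hχ 0)
  have hdeff : 0 ≤ ∑ i, a i ⬝ᵥ ((of a)ᴴ * of a + ((n : ℝ) * (ν / B)) • 1)⁻¹ *ᵥ a i :=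
    (Finset.sum_nonneg fun i _ => hlev 0 i).trans (hsum 0)
  refine Real.sInf_le_of_mem_of_nonneg (fun w i => ?_) (by positivity)
  exact smul_vecMulVec_add_smul_one_le a (hd w) hn' hν i
    (mul_le_of_div_sum_mul_iSup_le (hlev w) hn'.le (hχ w) (hsum w) i)

/-- Hessian dissimilarity bound for GLMs. For `F(w) = (1/n)∑ᵢ φᵢ(aᵢᵀw) + (ν/2)‖w‖²` with
`0 ≤ φᵢ'' ≤ B`, the Hessian dissimilarity
`τ⋆^ν = sup_w maxᵢ λ₁((∇²f(w)+νI)^{−1/2}(∇²fᵢ(w)+νI)(∇²f(w)+νI)^{−1/2})`, expressed equivalently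
as `inf {t | ∀ w i, ∇²fᵢ(w)+νI ⪯ t(∇²f(w)+νI)}`, satisfies `τ⋆^ν ≤ 1 + χ⋆^ν · d_eff^{ν/B}(A)`,
where `χ⋆^ν` is (an upper bound on) the ridge leverage coherence
`χ^ν(Φ''(Aw)^{1/2}A) = (n/d_eff^ν(Φ''(Aw)^{1/2}A))·maxᵢ lᵢ^ν(Φ''(Aw)^{1/2}A)` over all `w`,
with ridge leverage scores `lᵢ^ν(Φ''(Aw)^{1/2}A) = φᵢ''(aᵢᵀw)·aᵢᵀ(AᵀΦ''(Aw)A + nνI)⁻¹aᵢ`. -/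
theorem hessian_dissimilarity_glm {n p : ℕ} (hn : 0 < n)
    (a : Fin n → Fin p → ℝ) (φ φ' φ'' : Fin n → ℝ → ℝ)
    (hφ' : ∀ i x, HasDerivAt (φ i) (φ' i x) x)
    (hφ'' : ∀ i x, HasDerivAt (φ' i) (φ'' i x) x)
    (B ν : ℝ) (hB : 0 < B) (hν : 0 < ν)
    (hφnn : ∀ i x, 0 ≤ φ'' i x) (hφB : ∀ i x, φ'' i x ≤ B)
    (χstar : ℝ)
    (hχ : ∀ w : Fin p → ℝ,
      ((n : ℝ) / ∑ i, φ'' i (a i ⬝ᵥ w) *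
          (a i ⬝ᵥ ((Matrix.of a)ᴴ * Matrix.diagonal (fun j => φ'' j (a j ⬝ᵥ w)) * Matrix.of a
              + ((n : ℝ) * ν) • (1 : Matrix (Fin p) (Fin p) ℝ))⁻¹.mulVec (a i)))
        * (⨆ i : Fin n, φ'' i (a i ⬝ᵥ w) *
            (a i ⬝ᵥ ((Matrix.of a)ᴴ * Matrix.diagonal (fun j => φ'' j (a j ⬝ᵥ w)) * Matrix.of a
                + ((n : ℝ) * ν) • (1 : Matrix (Fin p) (Fin p) ℝ))⁻¹.mulVec (a i)))
        ≤ χstar) :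
    sInf {t : ℝ | ∀ (w : Fin p → ℝ) (i : Fin n),
        (t • ((n : ℝ)⁻¹ • ((Matrix.of a)ᴴ * Matrix.diagonal (fun j => φ'' j (a j ⬝ᵥ w))
                * Matrix.of a) + ν • (1 : Matrix (Fin p) (Fin p) ℝ))
          - (φ'' i (a i ⬝ᵥ w) • vecMulVec (a i) (a i)
                + ν • (1 : Matrix (Fin p) (Fin p) ℝ))).PosSemidef}
      ≤ 1 + χstar * ∑ i, a i ⬝ᵥ ((Matrix.of a)ᴴ * Matrix.of a
          + ((n : ℝ) * (ν / B)) • (1 : Matrix (Fin p) (Fin p) ℝ))⁻¹.mulVec (a i) :=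
  hessian_dissimilarity_glm_general hn a φ'' B ν hB hν hφnn hφB χstar hχ
end
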